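/- arXiv:0803.0792 — 8 statements merged into one kernel-verified Lean document; each statement's English description precedes it below -/
import Mathlib

section
/- Let E be a directed graph on a vertex type V and let O be a topological order of E. Let v, w be vertices with O w < O v, and suppose there is no path from w to v under E. Let s be a vertex with no path from w to s under E. Define X = {x | there is a path from w to x under E and O x < O s} and Y = {y | there is a path from y to v under E and O s < O y}. Suppose O' is an injective function from V into a linear order such that: (i) for all a, b ∉ X ∪ Y, O' a < O' b if and only if O a < O b; (ii) for every a ∉ X ∪ Y and every c ∈ X ∪ Y, if O a ≤ O s then O' a < O' c, and if O s < O a then O' c < O' a; (iii) O' y < O' x for every y ∈ Y and x ∈ X; (iv) for all x, x' ∈ X with E x x' one has O' x < O' x', and for all y, y' ∈ Y with E y y' one has O' y < O' y'. Then O' is a topological order of the graph E + (v,w); that is, for all a, b with E a b one has O' a < O' b, and moreover O' v < O' w. -/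
/-- Correctness of the reordering step of bidirectional search:
if `O` is a topological order of `E`, there is no path from `w` to `v`,
and `O'` reorders the sets `X` (forward vertices below `s`) and `Y`
(backward vertices above `s`) as described, then `O'` is a topological
order of the graph `E + (v,w)`. -/
theorem bidirectional_search_reorder_correct
    {V α β : Type*} [LinearOrder α] [LinearOrder β]
    (E : V → V → Prop) (O : V → α)
    (hOinj : Function.Injective O)
    (hOtopo : ∀ a b, E a b → O a < O b)
    (v w s : V)
    (hvw : O w < O v)
    (hnopath : ¬ Relation.ReflTransGen E w v)
    (hs : ¬ Relation.ReflTransGen E w s)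
    (X Y : Set V)
    (hX : X = {x | Relation.ReflTransGen E w x ∧ O x < O s})
    (hY : Y = {y | Relation.ReflTransGen E y v ∧ O s < O y})
    (O' : V → β)
    (hO'inj : Function.Injective O')
    (h1 : ∀ a b, a ∉ X ∪ Y → b ∉ X ∪ Y → (O' a < O' b ↔ O a < O b))
    (h2 : ∀ a, a ∉ X ∪ Y → ∀ c ∈ X ∪ Y,
      (O a ≤ O s → O' a < O' c) ∧ (O s < O a → O' c < O' a))
    (h3 : ∀ y ∈ Y, ∀ x ∈ X, O' y < O' x)
    (h4X : ∀ x ∈ X, ∀ x' ∈ X, E x x' → O' x < O' x')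
    (h4Y : ∀ y ∈ Y, ∀ y' ∈ Y, E y y' → O' y < O' y') :
    (∀ a b, E a b → O' a < O' b) ∧ O' v < O' w := by
  have hOsne : ∀ x, Relation.ReflTransGen E w x → O x ≠ O s := by
    intro x h he
    exact hs (hOinj he ▸ h)
  constructor
  · intro a b hab
    have hOab : O a < O b := hOtopo a b hab
    by_cases haX : a ∈ X
    · by_cases hbX : b ∈ X
      · exact h4X a haX b hbX hab
      · have hwa : Relation.ReflTransGen E w a := (hX ▸ haX).1
        have hwb : Relation.ReflTransGen E w b := hwa.tail hab
        have hbY : b ∉ Y := by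
          intro hbY
          exact hnopath (hwb.trans (hY ▸ hbY).1)
        have hbsb : O s < O b := by
          rcases lt_trichotomy (O b) (O s) with h | h | h
          · exact absurd (hX ▸ Set.mem_setOf_eq ▸ ⟨hwb, h⟩) hbX
          · exact absurd h (hOsne b hwb)
          · exact h
        exact (h2 b (by simp [hbX, hbY]) a (Set.mem_union_left _ haX)).2 hbsb
    · by_cases haY : a ∈ Y
      · by_cases hbX : b ∈ X
        · exact h3 a haY b hbX
        · by_cases hbY : b ∈ Y
          · exact h4Y a haY b hbY hab
          · have hsa : O s < O a := (hY ▸ haY).2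
            exact (h2 b (by simp [hbX, hbY]) a (Set.mem_union_right _ haY)).2
              (hsa.trans hOab)
      · -- a ∉ X ∪ Y
        have haXY : a ∉ X ∪ Y := by simp [haX, haY]
        by_cases hbX : b ∈ X
        · have hbs : O b < O s := (hX ▸ hbX).2
          exact (h2 a haXY b (Set.mem_union_left _ hbX)).1 (hOab.trans hbs).le
        · by_cases hbY : b ∈ Y
          · have has : O a ≤ O s := by
              by_contra h
              push_neg at h
              exact haY (hY ▸ Set.mem_setOf_eq ▸
                ⟨Relation.ReflTransGen.trans (Relation.ReflTransGen.single hab)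
                  (hY ▸ hbY).1, h⟩)
            exact (h2 a haXY b (Set.mem_union_right _ hbY)).1 has
          · exact (h1 a b haXY (by simp [hbX, hbY])).2 hOab
  · -- O' v < O' w
    have hvX : v ∉ X := fun h => hnopath (hX ▸ h).1
    have hws : O w ≠ O s := hOsne w Relation.ReflTransGen.refl
    rcases lt_or_gt_of_ne hws with hws | hws
    · -- w ∈ X
      have hwX : w ∈ X := hX ▸ Set.mem_setOf_eq ▸ ⟨Relation.ReflTransGen.refl, hws⟩
      by_cases hvY : v ∈ Y
      · exact h3 v hvY w hwX
      · have hvs : O v ≤ O s := by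
          by_contra h
          push_neg at h
          exact hvY (hY ▸ Set.mem_setOf_eq ▸ ⟨Relation.ReflTransGen.refl, h⟩)
        exact (h2 v (by simp [hvX, hvY]) w (Set.mem_union_left _ hwX)).1 hvs
    · -- O s < O w, so w ∉ X ∪ Y, and v ∈ Y
      have hwY : w ∉ Y := fun h => hnopath (hY ▸ h).1
      have hwX : w ∉ X := fun h => absurd (hX ▸ h).2 (not_lt.mpr hws.le)
      have hvY : v ∈ Y :=
        hY ▸ Set.mem_setOf_eq ▸ ⟨Relation.ReflTransGen.refl, hws.trans hvw⟩
      exact (h2 w (by simp [hwX, hwY]) v (Set.mem_union_right _ hvY)).2 hws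
end

section
/- Let E be a directed graph on a vertex type V that admits a topological order, and let v, w be vertices. Then the graph E + (v,w) contains a cycle (i.e., there exists a vertex x with Relation.TransGen (E + (v,w)) x x) if and only if there is a path from w to v under E. -/
/-! A topological order rules out cycles in `E`, so a cycle of `E + (v,w)` must use the new arc;
cutting it there leaves an `E`-path from `w` to `v`. -/

open Relation

section AddArc

variable {V : Type*} (E : V → V → Prop) (v w : V)

def addArc : V → V → Prop := fun a b => E a b ∨ (a = v ∧ b = w)

variable {E v w}

theorem reflTransGen_addArc_of_reflTransGen {a b : V} (h : ReflTransGen E a b) :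
    ReflTransGen (addArc E v w) a b :=
  ReflTransGen.mono (fun _ _ => Or.inl) _ _ h

-- Forward: the prefix before the first use of the arc and the suffix after its last use.
theorem transGen_addArc_iff {a b : V} :
    TransGen (addArc E v w) a b ↔
      TransGen E a b ∨ (ReflTransGen E a v ∧ ReflTransGen E w b) := by
  constructor
  · intro h
    induction h with
    | single hab =>
      rcases hab with hab | ⟨rfl, rfl⟩
      · exact .inl (.single hab)
      · exact .inr ⟨.refl, .refl⟩
    | tail _ hcd ih =>
      rcases hcd with hcd | ⟨rfl, rfl⟩
      · exact ih.imp (·.tail hcd) (And.imp_right (·.tail hcd))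
      · exact .inr ⟨ih.elim TransGen.to_reflTransGen And.left, .refl⟩
  · rintro (h | ⟨hav, hwb⟩)
    · exact TransGen.mono (fun _ _ => Or.inl) _ _ h
    · have hvw : TransGen (addArc E v w) v w := .single (.inr ⟨rfl, rfl⟩)
      exact (TransGen.trans_right (reflTransGen_addArc_of_reflTransGen hav) hvw).trans_left
        (reflTransGen_addArc_of_reflTransGen hwb)

end AddArc

theorem not_transGen_self_of_forall_lt {V α : Type*} [Preorder α] {E : V → V → Prop}
    {O : V → α} (hO : ∀ a b, E a b → O a < O b) (x : V) : ¬ TransGen E x x := fun h =>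
  lt_irrefl (O x) <| by simpa only [transGen_eq_self] using h.lift O hO

theorem addArc_cycle_iff_path_general
    {V α : Type*} [LinearOrder α]
    (E : V → V → Prop) (O : V → α)
    (hOtopo : ∀ a b, E a b → O a < O b)
    (v w : V) :
    (∃ x, Relation.TransGen (fun a b => E a b ∨ (a = v ∧ b = w)) x x) ↔
      Relation.ReflTransGen E w v := by
  change (∃ x, TransGen (addArc E v w) x x) ↔ _
  simp only [transGen_addArc_iff, or_iff_right (not_transGen_self_of_forall_lt hOtopo _)]
  exact ⟨fun ⟨_, hxv, hwx⟩ => hwx.trans hxv, fun hwv => ⟨v, .refl, hwv⟩⟩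

/-- If `E` admits a topological order, then adding the arc `(v,w)` creates a
cycle if and only if there is a path from `w` to `v` in `E`. -/
theorem addArc_cycle_iff_path
    {V α : Type*} [LinearOrder α]
    (E : V → V → Prop) (O : V → α)
    (hOinj : Function.Injective O)
    (hOtopo : ∀ a b, E a b → O a < O b)
    (v w : V) :
    (∃ x, Relation.TransGen (fun a b => E a b ∨ (a = v ∧ b = w)) x x) ↔
      Relation.ReflTransGen E w v :=
  addArc_cycle_iff_path_general E O hOtopo v w
end

section
/- Let α be a linear order, let k be a natural number, and let u, z : Fin k → α satisfy u i < z i for every i (each forward-traversed arc is compatible with its paired backward-traversed arc). Then the number of pairs (i, j) ∈ Fin k × Fin k with u i < z j is at least k²/4. -/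
/-- If the `i`-th traversal step traverses a forward arc out of `u i` and a
backward arc into `z i`, and each such pair is compatible (`u i < z i`),
then at least `k²/4` pairs `(i, j)` satisfy `u i < z j` (i.e., become newly
related). -/
theorem compatible_search_newly_related_pairs
    {α : Type*} [LinearOrder α] (k : ℕ) (u z : Fin k → α)
    (hcompat : ∀ i, u i < z i) :
    ((k : ℝ) ^ 2) / 4 ≤
      ((Finset.univ.filter (fun p : Fin k × Fin k => u p.1 < z p.2)).card : ℝ) := by
  set S := Finset.univ.filter (fun p : Fin k × Fin k => u p.1 < z p.2) with hS
  have hcover : (Finset.univ : Finset (Fin k × Fin k)) ⊆ S ∪ S.image Prod.swap := by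
    intro p _
    by_cases h : u p.1 < z p.2
    · exact Finset.mem_union_left _ (by simp [hS, h])
    · refine Finset.mem_union_right _ ?_
      have h21 : u p.2 < z p.1 :=
        lt_trans (lt_of_lt_of_le (hcompat p.2) (le_of_not_gt h)) (hcompat p.1)
      refine Finset.mem_image.mpr ⟨(p.2, p.1), by simp [hS, h21], rfl⟩
  have hcard : k ^ 2 ≤ 2 * S.card := by
    have h1 : (Finset.univ : Finset (Fin k × Fin k)).card ≤ S.card + (S.image Prod.swap).card :=
      le_trans (Finset.card_le_card hcover) (Finset.card_union_le _ _)
    have h2 : (S.image Prod.swap).card ≤ S.card := Finset.card_image_le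
    simp only [Finset.card_univ, Fintype.card_prod, Fintype.card_fin] at h1
    nlinarith
  have : (k : ℝ) ^ 2 ≤ 2 * (S.card : ℝ) := by exact_mod_cast hcard
  linarith
end

section
/- Let E be a directed graph on a vertex type V with topological order O, let v, w be vertices with no path from w to v under E, and let u, x, y, z be vertices with: a path from w to u under E, an arc E u x, an arc E y z, a path from z to v under E, and O u < O z. Then there is no path from x to y under E and no path from z to u under E (so the arcs (u,x) and (y,z) do not lie on a common path in E), but there is a path from z to u under E + (v,w) (so the arcs (u,x) and (y,z) lie on a common path in E + (v,w)). -/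
open Relation

theorem Relation.ReflTransGen.le_of_topologicalOrder {V α : Type*} [Preorder α]
    {E : V → V → Prop} {O : V → α} (hO : ∀ a b, E a b → O a < O b) {a b : V}
    (h : ReflTransGen E a b) : O a ≤ O b := by
  have hle : ReflTransGen (· ≤ ·) (O a) (O b) := h.lift O fun a b hab => (hO a b hab).le
  rwa [reflTransGen_eq_self] at hle

theorem not_reflTransGen_of_arcs_between {V : Type*} {E : V → V → Prop}
    {v w u x y z : V} (hnopath : ¬ ReflTransGen E w v) (hwu : ReflTransGen E w u)
    (hux : E u x) (hyz : E y z) (hzv : ReflTransGen E z v) :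
    ¬ ReflTransGen E x y := fun hxy =>
  hnopath ((((hwu.tail hux).trans hxy).tail hyz).trans hzv)

theorem reflTransGen_through_arc {V : Type*} {E E' : V → V → Prop} (hE : E ≤ E')
    {v w u z : V} (hvw : E' v w) (hzv : ReflTransGen E z v) (hwu : ReflTransGen E w u) :
    ReflTransGen E' z u :=
  ((ReflTransGen.mono hE _ _ hzv).tail hvw).trans (ReflTransGen.mono hE _ _ hwu)

theorem compatible_arcs_newly_related_general
    {V α : Type*} [LinearOrder α]
    (E : V → V → Prop) (O : V → α)
    (hOtopo : ∀ a b, E a b → O a < O b)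
    (v w u x y z : V)
    (hnopath : ¬ Relation.ReflTransGen E w v)
    (hwu : Relation.ReflTransGen E w u)
    (hux : E u x)
    (hyz : E y z)
    (hzv : Relation.ReflTransGen E z v)
    (huz : O u < O z) :
    ¬ Relation.ReflTransGen E x y ∧
    ¬ Relation.ReflTransGen E z u ∧
    Relation.ReflTransGen (fun a b => E a b ∨ (a = v ∧ b = w)) z u :=
  ⟨not_reflTransGen_of_arcs_between hnopath hwu hux hyz hzv,
    fun hzu => (hzu.le_of_topologicalOrder hOtopo).not_gt huz,
    reflTransGen_through_arc (fun _ _ => Or.inl) (Or.inr ⟨rfl, rfl⟩) hzv hwu⟩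

/-- A compatible pair of traversed arcs `(u,x)` and `(y,z)` (with `u < z`)
is newly related: the two arcs do not lie on a common path in `E`, but they
do lie on a common path in `E + (v,w)`. -/
theorem compatible_arcs_newly_related
    {V α : Type*} [LinearOrder α]
    (E : V → V → Prop) (O : V → α)
    (hOinj : Function.Injective O)
    (hOtopo : ∀ a b, E a b → O a < O b)
    (v w u x y z : V)
    (hnopath : ¬ Relation.ReflTransGen E w v)
    (hwu : Relation.ReflTransGen E w u)
    (hux : E u x)
    (hyz : E y z)
    (hzv : Relation.ReflTransGen E z v)
    (huz : O u < O z) :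
    ¬ Relation.ReflTransGen E x y ∧
    ¬ Relation.ReflTransGen E z u ∧
    Relation.ReflTransGen (fun a b => E a b ∨ (a = v ∧ b = w)) z u :=
  compatible_arcs_newly_related_general E O hOtopo v w u x y z hnopath hwu hux hyz hzv huz
end

section
/- Let E be a directed graph on a vertex type V with topological order O, let v, w be vertices with no path from w to v under E, and let u, x be vertices with a path from w to u under E, an arc E u x, and O u < O v. Then there is no path from x to v under E and no path from v to u under E (so vertex v and the arc (u,x) do not lie on a common path in E), but there is a path from v to u under E + (v,w) (so vertex v and the arc (u,x) lie on a common path in E + (v,w)). -/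
theorem Relation.ReflTransGen.map_le {V α : Type*} [Preorder α] {r : V → V → Prop} {f : V → α}
    (hf : ∀ a b, r a b → f a ≤ f b) {a b : V} (h : Relation.ReflTransGen r a b) : f a ≤ f b :=
  Relation.reflTransGen_le_of_le le_rfl _ _ (h.lift f hf)

theorem forward_arc_newly_related_to_v_general
    {V α : Type*} [LinearOrder α]
    (E : V → V → Prop) (O : V → α)
    (hOtopo : ∀ a b, E a b → O a < O b)
    (v w u x : V)
    (hnopath : ¬ Relation.ReflTransGen E w v)
    (hwu : Relation.ReflTransGen E w u)
    (hux : E u x)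
    (huv : O u < O v) :
    ¬ Relation.ReflTransGen E x v ∧
    ¬ Relation.ReflTransGen E v u ∧
    Relation.ReflTransGen (fun a b => E a b ∨ (a = v ∧ b = w)) v u :=
  ⟨fun hxv => hnopath ((hwu.tail hux).trans hxv),
    fun hvu => (hvu.map_le fun a b hab => (hOtopo a b hab).le).not_gt huv,
    .head (Or.inr ⟨rfl, rfl⟩) (Relation.ReflTransGen.mono (fun _ _ => Or.inl) _ _ hwu)⟩

/-- An arc `(u,x)` traversed forward within the affected region (`O u < O v`)
is newly related to the vertex `v`: vertex `v` and the arc `(u,x)` do not lie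
on a common path in `E`, but they do in `E + (v,w)`. -/
theorem forward_arc_newly_related_to_v
    {V α : Type*} [LinearOrder α]
    (E : V → V → Prop) (O : V → α)
    (hOinj : Function.Injective O)
    (hOtopo : ∀ a b, E a b → O a < O b)
    (v w u x : V)
    (hnopath : ¬ Relation.ReflTransGen E w v)
    (hwu : Relation.ReflTransGen E w u)
    (hux : E u x)
    (huv : O u < O v) :
    ¬ Relation.ReflTransGen E x v ∧
    ¬ Relation.ReflTransGen E v u ∧
    Relation.ReflTransGen (fun a b => E a b ∨ (a = v ∧ b = w)) v u :=
  forward_arc_newly_related_to_v_general E O hOtopo v w u x hnopath hwu hux huv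
end

section
/- Let m > 0 be a real number and let k₁, …, k_T be nonnegative real numbers with ∑ᵢ (kᵢ/2)² < m²/2. Then ∑ᵢ 2kᵢ < T·m^{1/2} + 8·m^{3/2}. -/
open scoped BigOperators

/-- The `O(m^{1/2})` amortized bound on arcs traversed: if the `i`-th of `T`
searches traverses `2 k i` arcs and creates at least `(k i / 2)²` newly
related arc-arc pairs, of which there are fewer than `m²/2` in total, then
the total number of traversed arcs is less than `T·m^{1/2} + 8·m^{3/2}`. -/
theorem amortized_arc_traversals
    (m : ℝ) (hm : 0 < m) (T : ℕ) (k : Fin T → ℝ)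
    (hnonneg : ∀ i, 0 ≤ k i)
    (hpairs : ∑ i, (k i / 2) ^ 2 < m ^ 2 / 2) :
    ∑ i, 2 * k i < T * m ^ ((1 : ℝ) / 2) + 8 * m ^ ((3 : ℝ) / 2) := by
  set s := m ^ ((1 : ℝ) / 2) with hsdef
  have hs : 0 < s := Real.rpow_pos_of_pos hm _
  have hss : s * s = m := by
    rw [hsdef, ← Real.rpow_add hm]
    norm_num
  have h32 : m ^ ((3 : ℝ) / 2) * s = m ^ 2 := by
    rw [hsdef, ← Real.rpow_add hm]
    norm_num
  have h1 : ∀ i, 2 * k i ≤ s + 4 * (k i) ^ 2 / s := by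
    intro i
    have hk := hnonneg i
    have h2 : s + 4 * k i ^ 2 / s = (s * s + 4 * k i ^ 2) / s := by field_simp
    rw [h2, le_div_iff₀ hs]
    nlinarith [sq_nonneg (s - 2 * k i)]
  have hsum : ∑ i, 2 * k i ≤ T * s + (4 / s) * ∑ i, (k i) ^ 2 := by
    calc ∑ i, 2 * k i ≤ ∑ i, (s + 4 * (k i) ^ 2 / s) :=
          Finset.sum_le_sum fun i _ => h1 i
      _ = T * s + (4 / s) * ∑ i, (k i) ^ 2 := by
          rw [Finset.sum_add_distrib, Finset.sum_const, Finset.mul_sum,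
            Finset.card_univ, Fintype.card_fin, nsmul_eq_mul]
          congr 1
          apply Finset.sum_congr rfl
          intro i _
          ring
  have hk2 : ∑ i, (k i) ^ 2 < 2 * m ^ 2 := by
    have : ∑ i, (k i / 2) ^ 2 = (1 / 4) * ∑ i, (k i) ^ 2 := by
      rw [Finset.mul_sum]
      apply Finset.sum_congr rfl
      intro i _
      ring
    linarith [hpairs, this ▸ hpairs]
  have hfin : (4 / s) * ∑ i, (k i) ^ 2 < 8 * m ^ ((3 : ℝ) / 2) := by
    have h4s : 0 < 4 / s := by positivity
    have := mul_lt_mul_of_pos_left hk2 h4s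
    calc (4 / s) * ∑ i, (k i) ^ 2 < (4 / s) * (2 * m ^ 2) := this
      _ = 8 * m ^ ((3 : ℝ) / 2) := by
          rw [← h32]
          field_simp
          ring
  linarith
end

section
/- Let α be a linear order, let ε > 0 be a real number, and let (S₁, s₁), …, (S_T, s_T) be a sequence where each Sᵢ is a finite subset of α and sᵢ ∈ α, such that for every i: |{x ∈ Sᵢ : x ≤ sᵢ}| ≥ ε·|Sᵢ| and |{x ∈ Sᵢ : sᵢ ≤ x}| ≥ ε·|Sᵢ|, and moreover either every element of every later set S_j (j > i) is strictly greater than sᵢ, or every element of every later set S_j (j > i) is strictly less than sᵢ. Then ∑ᵢ |Sᵢ| ≤ (1/ε)·|⋃ᵢ Sᵢ|. -/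
open scoped BigOperators

/-- The charging argument for soft thresholds: if each threshold `s i` is an
`ε`-approximate median of the group `S i` that becomes near, and after step
`i` all later groups lie strictly on one side of `s i`, then the total size
of all groups is at most `(1/ε)` times the size of their union. -/
theorem soft_threshold_charging
    {α : Type*} [LinearOrder α] [DecidableEq α]
    (ε : ℝ) (hε : 0 < ε) (T : ℕ)
    (S : Fin T → Finset α) (s : Fin T → α)
    (hlow : ∀ i, ε * ((S i).card : ℝ) ≤ (((S i).filter (fun x => x ≤ s i)).card : ℝ))
    (hhigh : ∀ i, ε * ((S i).card : ℝ) ≤ (((S i).filter (fun x => s i ≤ x)).card : ℝ))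
    (hside : ∀ i : Fin T,
      (∀ j : Fin T, i < j → ∀ x ∈ S j, s i < x) ∨
      (∀ j : Fin T, i < j → ∀ x ∈ S j, x < s i)) :
    (∑ i, ((S i).card : ℝ)) ≤ (1 / ε) * ((Finset.univ.biUnion S).card : ℝ) := by
  classical
  -- charged set: the side of `s i` that never appears again
  set C : Fin T → Finset α := fun i =>
    if (∀ j : Fin T, i < j → ∀ x ∈ S j, s i < x) then
      (S i).filter (fun x => x ≤ s i)
    else
      (S i).filter (fun x => s i ≤ x) with hC
  have hCsub : ∀ i, C i ⊆ S i := by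
    intro i
    simp only [hC]
    split <;> exact Finset.filter_subset _ _
  have hCcard : ∀ i, ε * ((S i).card : ℝ) ≤ ((C i).card : ℝ) := by
    intro i
    simp only [hC]
    split
    · exact hlow i
    · exact hhigh i
  have hdisj : ∀ i j : Fin T, i ≠ j → Disjoint (C i) (C j) := by
    have key : ∀ i j : Fin T, i < j → Disjoint (C i) (C j) := by
      intro i j hij
      rw [Finset.disjoint_left]
      intro x hxi hxj
      have hxSj : x ∈ S j := hCsub j hxj
      simp only [hC] at hxi
      split_ifs at hxi with h
      · have := (Finset.mem_filter.mp hxi).2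
        exact absurd (h j hij x hxSj) (not_lt.mpr this)
      · have h2 : ∀ k : Fin T, i < k → ∀ x ∈ S k, x < s i :=
          (hside i).resolve_left h
        have := (Finset.mem_filter.mp hxi).2
        exact absurd (h2 j hij x hxSj) (not_lt.mpr this)
    intro i j hij
    rcases lt_or_gt_of_ne hij with h | h
    · exact key i j h
    · exact (key j i h).symm
  have hsum : ∑ i, ((C i).card : ℝ) = ((Finset.univ.biUnion C).card : ℝ) := by
    rw [Finset.card_biUnion (fun i _ j _ hij => hdisj i j hij)]
    push_cast
    ring
  have hunion : (Finset.univ.biUnion C).card ≤ (Finset.univ.biUnion S).card := by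
    apply Finset.card_le_card
    apply Finset.biUnion_subset.mpr
    intro i _
    exact (hCsub i).trans (Finset.subset_biUnion_of_mem S (Finset.mem_univ i))
  rw [div_mul_eq_mul_div, le_div_iff₀ hε, mul_comm]
  calc ε * ∑ i, ((S i).card : ℝ) = ∑ i, ε * ((S i).card : ℝ) := (Finset.mul_sum _ _ _)
    _ ≤ ∑ i, ((C i).card : ℝ) := Finset.sum_le_sum fun i _ => hCcard i
    _ = ((Finset.univ.biUnion C).card : ℝ) := hsum
    _ ≤ ((Finset.univ.biUnion S).card : ℝ) := by exact_mod_cast hunion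
    _ = 1 * _ := (one_mul _).symm
end

section
/- Let E be a directed graph on a vertex type V and let v, w be vertices such that there is a path from w to v under E. Then for every vertex x, x is strongly connected to v under E + (v,w) if and only if there is a path from w to x under E and a path from x to v under E. In particular, v and w are strongly connected under E + (v,w), and the vertex set of the new strong component created by adding the arc (v,w) is Z = {x | there is a path from w to x and a path from x to v under E}. -/
/-!
A path in `E + (v,w)` either avoids the new arc, or splits at its first use into an `E`-path to
`v` and at its last use into an `E`-path from `w`. Hence the new arc is useless on paths ending
at `v`, while, once `w` reaches `v` in `E`, a vertex is reachable from `v` in `E + (v,w)` exactly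
when it is reachable from `w` in `E`.
-/

namespace Relation

variable {V : Type*} (E : V → V → Prop) (v w : V)

def addArc : V → V → Prop := fun a b => E a b ∨ (a = v ∧ b = w)

variable {E v w}

theorem ReflTransGen.addArc {a b : V} (h : ReflTransGen E a b) :
    ReflTransGen (addArc E v w) a b :=
  ReflTransGen.mono (fun _ _ => Or.inl) _ _ h

theorem reflTransGen_addArc_iff {a b : V} :
    ReflTransGen (addArc E v w) a b ↔
      ReflTransGen E a b ∨ (ReflTransGen E a v ∧ ReflTransGen E w b) := by
  constructor
  · intro h
    induction h with
    | refl => exact .inl .refl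
    | tail _ hstep ih =>
      rcases hstep with hE | ⟨rfl, rfl⟩
      · exact ih.imp (·.tail hE) fun ⟨hav, hwb⟩ => ⟨hav, hwb.tail hE⟩
      · exact .inr ⟨ih.elim id And.left, .refl⟩
  · rintro (hab | ⟨hav, hwb⟩)
    · exact hab.addArc
    · exact hav.addArc.trans (.head (.inr ⟨rfl, rfl⟩) hwb.addArc)

theorem reflTransGen_addArc_to_source_iff {a : V} :
    ReflTransGen (addArc E v w) a v ↔ ReflTransGen E a v := by
  rw [reflTransGen_addArc_iff, or_iff_left_of_imp And.left]

theorem reflTransGen_addArc_from_source_iff (hwv : ReflTransGen E w v) {b : V} :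
    ReflTransGen (addArc E v w) v b ↔ ReflTransGen E w b := by
  rw [reflTransGen_addArc_iff, or_iff_right_of_imp fun hwb => ⟨.refl, hwv.trans hwb⟩,
    and_iff_right .refl]

end Relation

/-- If there is a path from `w` to `v` in `E`, then after adding the arc
`(v,w)` a vertex `x` is strongly connected to `v` iff `w` reaches `x` and
`x` reaches `v` in `E`; in particular `v` and `w` become strongly connected,
so the vertex set of the new strong component is
`Z = {x | w ⟶* x and x ⟶* v under E}`. -/
theorem new_strong_component_of_addArc
    {V : Type*} (E : V → V → Prop) (v w : V)
    (hpath : Relation.ReflTransGen E w v) :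
    (∀ x : V,
      (Relation.ReflTransGen (fun a b => E a b ∨ (a = v ∧ b = w)) x v ∧
       Relation.ReflTransGen (fun a b => E a b ∨ (a = v ∧ b = w)) v x) ↔
      (Relation.ReflTransGen E w x ∧ Relation.ReflTransGen E x v)) ∧
    (Relation.ReflTransGen (fun a b => E a b ∨ (a = v ∧ b = w)) v w ∧
     Relation.ReflTransGen (fun a b => E a b ∨ (a = v ∧ b = w)) w v) :=
  ⟨fun _ => (Relation.reflTransGen_addArc_to_source_iff.and
      (Relation.reflTransGen_addArc_from_source_iff hpath)).trans and_comm,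
    (Relation.reflTransGen_addArc_from_source_iff hpath).2 .refl, hpath.addArc⟩
end
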